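/- Let u ∈ Γ* be a factor of a word w ∈ Γ* (i.e. w = xuy for some x, y ∈ Γ*). If w = eval(e) for some exponential expression e over Γ of size ‖e‖ = p, then there exists an exponential expression e' over Γ with eval(e') = u and ‖e'‖ ≤ p². -/
import Mathlib

/-- Exponential expressions over an alphabet `Γ`: every word is an exponential
expression, and exponential expressions are closed under concatenation and
taking powers `(e)^k` for `k : ℕ`. -/
inductive ExpExpr (Γ : Type*) : Type _ where
  | word : List Γ → ExpExpr Γ
  | concat : ExpExpr Γ → ExpExpr Γ → ExpExpr Γ
  | pow : ExpExpr Γ → ℕ → ExpExpr Γ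

namespace ExpExpr

/-- Evaluation of an exponential expression: `eval w = w`,
`eval (e e') = eval e ⬝ eval e'`, and `eval ((e)^k) = (eval e)^k`. -/
def eval {Γ : Type*} : ExpExpr Γ → List Γ
  | word w => w
  | concat e e' => eval e ++ eval e'
  | pow e k => (List.replicate k (eval e)).flatten

/-- Size of an exponential expression: `‖w‖ = |w|`, `‖e e'‖ = ‖e‖ + ‖e'‖`, and
`‖(e)^k‖ = log k + ‖e‖` where `log k = max {1, ⌈log₂ k⌉}`. -/
def size {Γ : Type*} : ExpExpr Γ → ℕ
  | word w => w.length
  | concat e e' => size e + size e'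
  | pow e k => max 1 (Nat.clog 2 k) + size e

end ExpExpr

section Aux

variable {Γ : Type*}

private lemma prefix_split {a x y : List Γ} (h : a <+: x ++ y) :
    ∃ a1 a2, a = a1 ++ a2 ∧ a1 <+: x ∧ a2 <+: y := by
  obtain ⟨r, hr⟩ := h
  rw [List.append_eq_append_iff] at hr
  rcases hr with ⟨a', hx, _⟩ | ⟨c, ha, hy⟩
  · exact ⟨a, [], by simp, ⟨a', hx.symm⟩, List.nil_prefix⟩
  · exact ⟨x, c, ha, List.prefix_refl x, ⟨r, hy.symm⟩⟩

private lemma suffix_split {b x y : List Γ} (h : b <:+ x ++ y) :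
    ∃ b1 b2, b = b1 ++ b2 ∧ b1 <:+ x ∧ b2 <:+ y := by
  obtain ⟨r, hr⟩ := h
  rw [List.append_eq_append_iff] at hr
  rcases hr with ⟨a', hx, hb⟩ | ⟨c, _, hy⟩
  · exact ⟨a', y, hb, ⟨r, hx.symm⟩, List.suffix_refl y⟩
  · exact ⟨[], b, by simp, List.nil_suffix, ⟨c, hy.symm⟩⟩

private lemma prefix_append_cases {a x y : List Γ} (h : a <+: x ++ y) :
    a <+: x ∨ ∃ c, a = x ++ c ∧ c <+: y := by
  obtain ⟨r, hr⟩ := h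
  rw [List.append_eq_append_iff] at hr
  rcases hr with ⟨a', hx, _⟩ | ⟨c, ha, hy⟩
  · exact Or.inl ⟨a', hx.symm⟩
  · exact Or.inr ⟨c, ha, ⟨r, hy.symm⟩⟩

private lemma suffix_append_cases {b x y : List Γ} (h : b <:+ x ++ y) :
    b <:+ y ∨ ∃ c, b = c ++ y ∧ c <:+ x := by
  obtain ⟨r, hr⟩ := h
  rw [List.append_eq_append_iff] at hr
  rcases hr with ⟨a', hx, hb⟩ | ⟨c, _, hy⟩
  · exact Or.inr ⟨a', hb, ⟨r, hx.symm⟩⟩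
  · exact Or.inl ⟨c, hy.symm⟩

private lemma infix_split {u x y : List Γ} (h : u <:+: x ++ y) :
    u <:+: x ∨ u <:+: y ∨ ∃ u1 u2, u = u1 ++ u2 ∧ u1 <:+ x ∧ u2 <+: y := by
  obtain ⟨s, t, hst⟩ := h
  rw [List.append_assoc, List.append_eq_append_iff] at hst
  rcases hst with ⟨a', hx, hut⟩ | ⟨c, hs, hy⟩
  · rw [List.append_eq_append_iff] at hut
    rcases hut with ⟨w, ha, _⟩ | ⟨c, hu, hy⟩
    · exact Or.inl ⟨s, w, by rw [hx, ha, List.append_assoc]⟩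
    · exact Or.inr (Or.inr ⟨a', c, hu, ⟨s, hx.symm⟩, ⟨t, hy.symm⟩⟩)
  · exact Or.inr (Or.inl ⟨c, t, by rw [hy, List.append_assoc]⟩)

private lemma prefix_pow {v a : List Γ} {k : ℕ}
    (h : a <+: (List.replicate k v).flatten) :
    ∃ m t, m ≤ k ∧ t <+: v ∧ a = (List.replicate m v).flatten ++ t := by
  induction k generalizing a with
  | zero =>
    refine ⟨0, [], le_refl 0, List.nil_prefix, ?_⟩
    simpa [List.prefix_nil] using h
  | succ k ih =>
    rw [List.replicate_succ, List.flatten_cons] at h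
    rcases prefix_append_cases h with h' | ⟨c, hac, hc⟩
    · exact ⟨0, a, Nat.zero_le _, h', by simp⟩
    · obtain ⟨m, t, hm, ht, hc'⟩ := ih hc
      exact ⟨m + 1, t, by omega, ht,
        by rw [hac, hc', List.replicate_succ, List.flatten_cons, List.append_assoc]⟩

private lemma suffix_pow {v b : List Γ} {k : ℕ}
    (h : b <:+ (List.replicate k v).flatten) :
    ∃ m s, m ≤ k ∧ s <:+ v ∧ b = s ++ (List.replicate m v).flatten := by
  induction k generalizing b with
  | zero =>
    refine ⟨0, [], le_refl 0, List.nil_suffix, ?_⟩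
    simpa [List.suffix_nil] using h
  | succ k ih =>
    rw [List.replicate_succ', List.flatten_append] at h
    rcases suffix_append_cases h with h' | ⟨c, hbc, hc⟩
    · exact ⟨0, b, Nat.zero_le _, by simpa using h', by simp⟩
    · obtain ⟨m, s, hm, hs, hc'⟩ := ih hc
      refine ⟨m + 1, s, by omega, hs, ?_⟩
      rw [hbc, hc', List.replicate_succ', List.flatten_append]
      simp [List.append_assoc]

private lemma infix_pow {v u : List Γ} {k : ℕ}
    (h : u <:+: (List.replicate k v).flatten) :
    u <:+: v ∨ ∃ m s t, m ≤ k ∧ s <:+ v ∧ t <+: v ∧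
      u = s ++ (List.replicate m v).flatten ++ t := by
  induction k generalizing u with
  | zero =>
    left
    simp only [List.replicate_zero, List.flatten_nil, List.infix_nil] at h
    simp [h, List.nil_infix]
  | succ k ih =>
    rw [List.replicate_succ, List.flatten_cons] at h
    rcases infix_split h with h' | h' | ⟨u1, u2, hu, h1, h2⟩
    · exact Or.inl h'
    · rcases ih h' with h'' | ⟨m, s, t, hm, hs, ht, he⟩
      · exact Or.inl h''
      · exact Or.inr ⟨m, s, t, by omega, hs, ht, he⟩
    · obtain ⟨m, t, hm, ht, hu2⟩ := prefix_pow h2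
      exact Or.inr ⟨m, u1, t, by omega, h1, ht, by rw [hu, hu2, List.append_assoc]⟩

end Aux

namespace ExpExpr

variable {Γ : Type*}

private lemma pow_size_mono {k m : ℕ} (h : m ≤ k) (e : ExpExpr Γ) :
    (pow e m).size ≤ (pow e k).size := by
  simp only [size]
  exact Nat.add_le_add_right (max_le_max le_rfl (Nat.clog_mono_right 2 h)) _

/-- Simultaneous prefix/suffix lemma with bound `p² + p`. -/
private lemma pair (e : ExpExpr Γ) : ∀ a b : List Γ, a <+: e.eval → b <:+ e.eval →
    ∃ ea eb : ExpExpr Γ, ea.eval = a ∧ eb.eval = b ∧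
      ea.size + eb.size ≤ e.size ^ 2 + e.size := by
  induction e with
  | word w =>
    intro a b ha hb
    refine ⟨word a, word b, rfl, rfl, ?_⟩
    have h1 := ha.length_le
    have h2 := hb.length_le
    simp only [size, eval] at *
    nlinarith [h1, h2]
  | concat e1 e2 ih1 ih2 =>
    intro a b ha hb
    simp only [eval] at ha hb
    obtain ⟨a1, a2, hae, ha1, ha2⟩ := prefix_split ha
    obtain ⟨b1, b2, hbe, hb1, hb2⟩ := suffix_split hb
    obtain ⟨ea1, eb1, he1, hf1, hs1⟩ := ih1 a1 b1 ha1 hb1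
    obtain ⟨ea2, eb2, he2, hf2, hs2⟩ := ih2 a2 b2 ha2 hb2
    refine ⟨concat ea1 ea2, concat eb1 eb2, ?_, ?_, ?_⟩
    · simp [eval, he1, he2, hae]
    · simp [eval, hf1, hf2, hbe]
    · simp only [size]
      nlinarith [hs1, hs2]
  | pow e k ih =>
    intro a b ha hb
    simp only [eval] at ha hb
    obtain ⟨m1, t, hm1, ht, hae⟩ := prefix_pow ha
    obtain ⟨m2, s, hm2, hs, hbe⟩ := suffix_pow hb
    obtain ⟨et, es, he1, he2, hsz⟩ := ih t s ht hs
    refine ⟨concat (pow e m1) et, concat es (pow e m2), ?_, ?_, ?_⟩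
    · simp [eval, he1, hae]
    · simp [eval, he2, hbe]
    · have h1 := pow_size_mono hm1 e
      have h2 := pow_size_mono hm2 e
      simp only [size] at *
      have hL : 1 ≤ max 1 (Nat.clog 2 k) := le_max_left _ _
      nlinarith [hsz, h1, h2, hL]

private lemma eval_eq_nil_of_size_eq_zero (e : ExpExpr Γ) (h : e.size = 0) :
    e.eval = [] := by
  induction e with
  | word w => simpa [size, eval, List.length_eq_zero_iff] using h
  | concat e1 e2 ih1 ih2 =>
    simp only [size, Nat.add_eq_zero] at h
    simp [eval, ih1 h.1, ih2 h.2]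
  | pow e k ih =>
    exfalso
    simp only [size] at h
    omega

/-- Main factor lemma. -/
private lemma factor (e : ExpExpr Γ) : ∀ u : List Γ, u <:+: e.eval →
    ∃ e' : ExpExpr Γ, e'.eval = u ∧ e'.size ≤ e.size ^ 2 := by
  induction e with
  | word w =>
    intro u hu
    refine ⟨word u, rfl, ?_⟩
    have := hu.length_le
    simp only [size, eval] at *
    nlinarith [this]
  | concat e1 e2 ih1 ih2 =>
    intro u hu
    simp only [eval] at hu
    rcases infix_split hu with h | h | ⟨u1, u2, hue, h1, h2⟩
    · obtain ⟨e', he, hs⟩ := ih1 u h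
      refine ⟨e', he, le_trans hs ?_⟩
      exact Nat.pow_le_pow_left (Nat.le_add_right _ _) 2
    · obtain ⟨e', he, hs⟩ := ih2 u h
      refine ⟨e', he, le_trans hs ?_⟩
      exact Nat.pow_le_pow_left (Nat.le_add_left _ _) 2
    · by_cases hp1 : e1.size = 0
      · have hv1 : e1.eval = [] := eval_eq_nil_of_size_eq_zero e1 hp1
        have : u <:+: e2.eval := by
          have : u1 = [] := by
            have := h1.length_le
            simp [hv1] at this
            simpa [List.length_eq_zero_iff] using this
          rw [hue, this, List.nil_append]
          exact h2.isInfix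
        obtain ⟨e', he, hs⟩ := ih2 u this
        refine ⟨e', he, le_trans hs ?_⟩
        exact Nat.pow_le_pow_left (Nat.le_add_left _ _) 2
      · by_cases hp2 : e2.size = 0
        · have hv2 : e2.eval = [] := eval_eq_nil_of_size_eq_zero e2 hp2
          have : u <:+: e1.eval := by
            have hu2 : u2 = [] := by
              have := h2.length_le
              simp [hv2] at this
              simpa [List.length_eq_zero_iff] using this
            rw [hue, hu2, List.append_nil]
            exact h1.isInfix
          obtain ⟨e', he, hs⟩ := ih1 u this
          refine ⟨e', he, le_trans hs ?_⟩
          exact Nat.pow_le_pow_left (Nat.le_add_right _ _) 2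
        · obtain ⟨ea, eb, hea, heb, hs⟩ := pair e1 [] u1 List.nil_prefix h1
          obtain ⟨ea2, eb2, hea2, heb2, hs2⟩ := pair e2 u2 [] h2 List.nil_suffix
          refine ⟨concat eb ea2, ?_, ?_⟩
          · simp [ExpExpr.eval, heb, hea2, hue]
          · have hq1 : 1 ≤ e1.size := Nat.one_le_iff_ne_zero.mpr hp1
            have hq2 : 1 ≤ e2.size := Nat.one_le_iff_ne_zero.mpr hp2
            simp only [size] at *
            nlinarith [hs, hs2, hq1, hq2]
  | pow e k ih =>
    intro u hu
    simp only [eval] at hu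
    rcases infix_pow hu with h | ⟨m, s, t, hm, hs, ht, hue⟩
    · obtain ⟨e', he, hsz⟩ := ih u h
      refine ⟨e', he, le_trans hsz ?_⟩
      exact Nat.pow_le_pow_left (Nat.le_add_left _ _) 2
    · obtain ⟨et, es, he1, he2, hsz⟩ := pair e t s ht hs
      refine ⟨concat es (concat (pow e m) et), ?_, ?_⟩
      · simp [eval, he1, he2, hue]
      · have h1 := pow_size_mono hm e
        simp only [size] at *
        have hL : 1 ≤ max 1 (Nat.clog 2 k) := le_max_left _ _
        nlinarith [hsz, h1, hL]

end ExpExpr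

/-- Let `u ∈ Γ*` be a factor of a word `w ∈ Γ*` (i.e. `w = x u y` for some `x, y ∈ Γ*`).
If `w = eval e` for some exponential expression `e` over `Γ` of size `‖e‖ = p`, then
there exists an exponential expression `e'` over `Γ` with `eval e' = u` and `‖e'‖ ≤ p²`. -/
theorem expExpr_factor (Γ : Type*) (w u x y : List Γ) (e : ExpExpr Γ) (p : ℕ)
    (hfac : w = x ++ u ++ y) (heval : ExpExpr.eval e = w) (hsize : ExpExpr.size e = p) :
    ∃ e' : ExpExpr Γ, ExpExpr.eval e' = u ∧ ExpExpr.size e' ≤ p ^ 2 := by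
  subst hsize
  have : u <:+: e.eval := ⟨x, y, by rw [heval, hfac]⟩
  exact ExpExpr.factor e u this
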